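/- arXiv:1312.1205 — 2 statements merged into one kernel-verified Lean document; each statement's English description precedes it below -/
import Mathlib

section
/- (Thomason) For all finite nonempty simple graphs G and G', and for every labeled graph H on vertex set {1,…,t}: r̂(H, G ⊗ G') = r̂(H, G) · r̂(H, G'). -/
open Filter Topology SimpleGraph

namespace IndPaper

/-- The pullback of `G : SimpleGraph V` along a map `f : Fin t → V`:
distinct `i, j` are adjacent iff `f i` and `f j` are adjacent in `G`. -/
def pull {V : Type*} {t : ℕ} (G : SimpleGraph V) (f : Fin t → V) : SimpleGraph (Fin t) where
  Adj i j := G.Adj (f i) (f j)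
  symm := ⟨fun i j h => G.adj_symm h⟩
  loopless := ⟨fun i h => G.irrefl h⟩

/-- `r(H,G)`: the labeled density with repetitions of the labeled graph `H` in `G`. -/
noncomputable def labDensity {V : Type*} [Fintype V] {t : ℕ}
    (H : SimpleGraph (Fin t)) (G : SimpleGraph V) : ℝ :=
  (Nat.card {f : Fin t → V // pull G f = H} : ℝ) / (Fintype.card V : ℝ) ^ t

/-- `R(H,G)`: the density with repetitions of the isomorphism type of `H` in `G`. -/
noncomputable def repDensity {V : Type*} [Fintype V] {t : ℕ}
    (H : SimpleGraph (Fin t)) (G : SimpleGraph V) : ℝ :=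
  (Nat.card {f : Fin t → V // Nonempty (pull G f ≃g H)} : ℝ) / (Fintype.card V : ℝ) ^ t

/-- `p(H,G)`: the labeled density without repetitions (injective samples). -/
noncomputable def injDensity {V : Type*} [Fintype V] {t : ℕ}
    (H : SimpleGraph (Fin t)) (G : SimpleGraph V) : ℝ :=
  (Nat.card {f : Fin t → V // Function.Injective f ∧ pull G f = H} : ℝ) /
    ((Fintype.card V).descFactorial t : ℝ)

/-- `P(H,G)`: the number of `t`-subsets of `V(G)` inducing a copy of `H`, over `C(n,t)`. -/
noncomputable def subsetDensity {V : Type*} [Fintype V] {t : ℕ}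
    (H : SimpleGraph (Fin t)) (G : SimpleGraph V) : ℝ :=
  (Nat.card {s : Finset V // s.card = t ∧ Nonempty (G.induce (↑s : Set V) ≃g H)} : ℝ) /
    ((Fintype.card V).choose t : ℝ)

/-- `max_{|G|=n} P(H,G)`. -/
noncomputable def maxDensity {t : ℕ} (H : SimpleGraph (Fin t)) (n : ℕ) : ℝ :=
  sSup {x : ℝ | ∃ G : SimpleGraph (Fin n), x = subsetDensity H G}

/-- `min_{|G|=n} P(H,G)`. -/
noncomputable def minDensity {t : ℕ} (H : SimpleGraph (Fin t)) (n : ℕ) : ℝ :=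
  sInf {x : ℝ | ∃ G : SimpleGraph (Fin n), x = subsetDensity H G}

/-- The inducibility `I(H) = lim_n max_{|G|=n} P(H,G)` (the sequence of maxima is
eventually non-increasing, hence the limit exists and equals the `limsup`). -/
noncomputable def inducibility {t : ℕ} (H : SimpleGraph (Fin t)) : ℝ :=
  Filter.limsup (fun n => maxDensity H n) Filter.atTop

/-- The minimal inducibility `i(H) = lim_n min_{|G|=n} P(H,G)` (the sequence of minima is
eventually non-decreasing, hence the limit exists and equals the `liminf`). -/
noncomputable def minInducibility {t : ℕ} (H : SimpleGraph (Fin t)) : ℝ :=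
  Filter.liminf (fun n => minDensity H n) Filter.atTop

/-- The spectral profile: discrete Fourier transform of the labeled profile over the group
of labeled `t`-vertex graphs under symmetric difference of edge sets. -/
noncomputable def spectral {V : Type*} [Fintype V] {t : ℕ}
    (H : SimpleGraph (Fin t)) (G : SimpleGraph V) : ℝ :=
  ∑ H' : SimpleGraph (Fin t),
    (-1 : ℝ) ^ (Nat.card (H ⊓ H').edgeSet) * labDensity H' G

/-- The tensor product `G ⊗ G'`. -/
def tensor {V W : Type*} (G : SimpleGraph V) (G' : SimpleGraph W) : SimpleGraph (V × W) where
  Adj x y := Xor' (G.Adj x.1 y.1) (G'.Adj x.2 y.2)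
  symm := ⟨fun x y h => by
    rcases h with ⟨h1, h2⟩ | ⟨h1, h2⟩
    · exact Or.inl ⟨h1.symm, fun hc => h2 hc.symm⟩
    · exact Or.inr ⟨h1.symm, fun hc => h2 hc.symm⟩⟩
  loopless := ⟨fun x h => by
    rcases h with ⟨h1, _⟩ | ⟨h1, _⟩
    · exact G.irrefl h1
    · exact G'.irrefl h1⟩

/-- The composition (lexicographic product) `G ⊙ G'`. -/
def comp {V W : Type*} (G : SimpleGraph V) (G' : SimpleGraph W) : SimpleGraph (V × W) where
  Adj x y := G.Adj x.1 y.1 ∨ (x.1 = y.1 ∧ G'.Adj x.2 y.2)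
  symm := ⟨fun x y h => by
    rcases h with h | ⟨h1, h2⟩
    · exact Or.inl h.symm
    · exact Or.inr ⟨h1.symm, h2.symm⟩⟩
  loopless := ⟨fun x h => by
    rcases h with h | ⟨_, h2⟩
    · exact G.irrefl h
    · exact G'.irrefl h2⟩

/-- The blow-up of `G` of order `m`. -/
def blowUp {V : Type*} (G : SimpleGraph V) (m : ℕ) : SimpleGraph (V × Fin m) where
  Adj x y := G.Adj x.1 y.1
  symm := ⟨fun _ _ h => G.adj_symm h⟩
  loopless := ⟨fun _ h => G.irrefl h⟩

/-- Vertex type of the `n`-fold iterated composition. -/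
def iterVert (V : Type) : ℕ → Type
  | 0 => PUnit
  | n + 1 => V × iterVert V n

instance iterVertFintype (V : Type) [Fintype V] : (n : ℕ) → Fintype (iterVert V n)
  | 0 => inferInstanceAs (Fintype PUnit)
  | n + 1 => letI := iterVertFintype V n; inferInstanceAs (Fintype (V × iterVert V n))

/-- The `n`-fold iterated composition `G^{⊙n}` (`n = 0` gives a single vertex). -/
def nestedPow {V : Type} (G : SimpleGraph V) : (n : ℕ) → SimpleGraph (iterVert V n)
  | 0 => (⊥ : SimpleGraph PUnit)
  | n + 1 => comp G (nestedPow G n)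

/- Fixed labeled representatives of the 4-vertex isomorphism types. -/
def K3 : SimpleGraph (Fin 3) := ⊤
def K4 : SimpleGraph (Fin 4) := ⊤
def A4 : SimpleGraph (Fin 4) := ⊥
def P4 : SimpleGraph (Fin 4) := SimpleGraph.pathGraph 4
def C4 : SimpleGraph (Fin 4) := SimpleGraph.cycleGraph 4
def M4 : SimpleGraph (Fin 4) :=
  SimpleGraph.fromRel (fun i j => (i = 0 ∧ j = 1) ∨ (i = 2 ∧ j = 3))
def V4 : SimpleGraph (Fin 4) :=
  SimpleGraph.fromRel (fun i j => (i = 0 ∧ j = 1) ∨ (i = 0 ∧ j = 2))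
def Q4 : SimpleGraph (Fin 4) :=
  SimpleGraph.fromRel (fun i j =>
    (i = 0 ∧ j = 1) ∨ (i = 0 ∧ j = 2) ∨ (i = 1 ∧ j = 2) ∨ (i = 0 ∧ j = 3))
def T4 : SimpleGraph (Fin 4) :=
  SimpleGraph.fromRel (fun i j => (i = 0 ∧ j = 1) ∨ (i = 0 ∧ j = 2) ∨ (i = 1 ∧ j = 2))
def S4 : SimpleGraph (Fin 4) :=
  SimpleGraph.fromRel (fun i j => i = 0 ∧ (j = 1 ∨ j = 2 ∨ j = 3))
def D4 : SimpleGraph (Fin 4) :=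
  SimpleGraph.fromRel (fun i j =>
    (i = 0 ∧ j = 1) ∨ (i = 0 ∧ j = 2) ∨ (i = 0 ∧ j = 3) ∨ (i = 1 ∧ j = 2) ∨ (i = 1 ∧ j = 3))
def E4 : SimpleGraph (Fin 4) :=
  SimpleGraph.fromRel (fun i j => i = 0 ∧ j = 1)

end IndPaper

/-! The character `χ_H(X) = (-1)^{|E(H) ∩ E(X)|}` of the group of graphs on `Fin t` under
symmetric difference turns `r̂(H, G)` into the average of `χ_H(G[f])` over all maps
`f : Fin t → V(G)`, where `G[f]` is the graph pulled back along `f`. A map into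
`V(G) × V(G')` is a pair of maps `(f, g)`, and the graph it pulls back from `G ⊗ G'` is
`G[f] ∆ G'[g]`; since `χ_H` is multiplicative, the average over pairs factors. -/

open scoped symmDiff

theorem Fintype.sum_arrow_prod_mul {ι V W R : Type*} [Fintype ι] [DecidableEq ι] [Fintype V]
    [Fintype W] [CommSemiring R] (a : (ι → V) → R) (b : (ι → W) → R) :
    ∑ h : ι → V × W, a (Prod.fst ∘ h) * b (Prod.snd ∘ h) = (∑ f, a f) * ∑ g, b g := by
  rw [Finset.sum_mul_sum, ← Fintype.sum_prod_type']
  exact Fintype.sum_equiv (Equiv.arrowProdEquivProdArrow ι (fun _ => V) (fun _ => W)) _ _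
    fun _ => rfl

namespace IndPaper

noncomputable def graphChar {α : Type*} (H X : SimpleGraph α) : ℝ :=
  (-1) ^ Nat.card (H ⊓ X).edgeSet

theorem graphChar_eq_prod {α : Type*} [Fintype α] [DecidableEq α] (H X : SimpleGraph α)
    [DecidableRel H.Adj] [DecidableRel X.Adj] :
    graphChar H X = ∏ e ∈ H.edgeFinset, if e ∈ X.edgeFinset then -1 else 1 := by
  rw [graphChar, Nat.card_eq_fintype_card, ← edgeFinset_card, edgeFinset_inf,
    ← Finset.filter_mem_eq_inter, Finset.prod_ite, Finset.prod_const_one, mul_one,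
    Finset.prod_const]

theorem graphChar_symmDiff {α : Type*} [Finite α] (H X Y : SimpleGraph α) :
    graphChar H (X ∆ Y) = graphChar H X * graphChar H Y := by
  classical
  have := Fintype.ofFinite α
  simp only [graphChar_eq_prod, ← Finset.prod_mul_distrib]
  refine Finset.prod_congr rfl fun e _ => ?_
  induction e using Sym2.ind with
  | _ i j =>
    simp only [mem_edgeFinset, mem_edgeSet]
    simp only [symmDiff_def, sup_adj, sdiff_adj]
    by_cases hX : X.Adj i j <;> by_cases hY : Y.Adj i j <;> simp [hX, hY]

theorem pull_tensor {V W : Type*} {t : ℕ} (G : SimpleGraph V) (G' : SimpleGraph W)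
    (h : Fin t → V × W) :
    pull (tensor G G') h = pull G (Prod.fst ∘ h) ∆ pull G' (Prod.snd ∘ h) := by
  ext i j
  rfl

theorem spectral_eq_sum_graphChar_pull {V : Type*} [Fintype V] {t : ℕ}
    (H : SimpleGraph (Fin t)) (G : SimpleGraph V) :
    spectral H G = (∑ f : Fin t → V, graphChar H (pull G f)) / (Fintype.card V : ℝ) ^ t := by
  classical
  change ∑ H', graphChar H H' * labDensity H' G = _
  simp only [labDensity, mul_div_assoc', ← Finset.sum_div, Nat.card_eq_fintype_card,
    Fintype.card_subtype]
  rw [← Finset.sum_fiberwise Finset.univ (pull G)]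
  refine congrArg (· / _) (Finset.sum_congr rfl fun H' _ => ?_)
  rw [Finset.sum_congr rfl fun f hf => by rw [(Finset.mem_filter.1 hf).2], Finset.sum_const,
    nsmul_eq_mul, mul_comm]

end IndPaper

open IndPaper in
theorem spectral_tensor_general
    {V W : Type} [Fintype V] [Fintype W]
    (G : SimpleGraph V) (G' : SimpleGraph W) {t : ℕ} (H : SimpleGraph (Fin t)) :
    spectral H (tensor G G') = spectral H G * spectral H G' := by
  rw [spectral_eq_sum_graphChar_pull, spectral_eq_sum_graphChar_pull,
    spectral_eq_sum_graphChar_pull, div_mul_div_comm, ← Fintype.sum_arrow_prod_mul,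
    Fintype.card_prod, Nat.cast_mul, mul_pow]
  simp only [pull_tensor, graphChar_symmDiff]

open IndPaper in
/-- (Thomason) The spectral profile is multiplicative with respect to the tensor product:
`r̂(H, G ⊗ G') = r̂(H,G) ⬝ r̂(H,G')`. -/
theorem spectral_tensor
    {V W : Type} [Fintype V] [Nonempty V] [Fintype W] [Nonempty W]
    (G : SimpleGraph V) (G' : SimpleGraph W) {t : ℕ} (H : SimpleGraph (Fin t)) :
    spectral H (tensor G G') = spectral H G * spectral H G' :=
  spectral_tensor_general G G' H
end

section
/- For every t ≥ 5, the inducibility of the path P_t on t vertices satisfies I(P_t) ≤ t! / (2 (t−1)^{t−1}). -/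
open Filter Topology SimpleGraph

/-!
Every induced copy of `P_{k+1}` in `G` carries at least two injective labellings by the path
(a labelling and its reversal), so it suffices to count labellings `u₀, …, u_k`. Choose them
greedily: `u_{i+1}` is a neighbour of `u_i` avoiding the closed neighbourhoods of `u₀, …, u_{i-1}`.
The neighbours of `u_i` among the remaining candidates are removed from the candidates of all later
steps, so by AM-GM the number of continuations from `m` candidates is at most `(m/k)^k`. Hence an
`n`-vertex graph has at most `n (n/k)^k / 2` induced copies of `P_{k+1}`, while
`C(n, k+1) ~ n^{k+1} / (k+1)!`.
-/

namespace IndPaper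

open Finset

theorem mul_pow_le_mean_pow {a b : ℝ} (k : ℕ) (hb : 0 ≤ b) (hab : 0 ≤ a + k * b) :
    a * b ^ k ≤ ((a + k * b) / (k + 1)) ^ (k + 1) := by
  set M := (a + k * b) / (k + 1) with hM
  have hM0 : 0 ≤ M := by positivity
  rcases hb.eq_or_lt with rfl | hb
  · rcases k with _ | k
    · simp [hM]
    · simp only [zero_pow k.succ_ne_zero, mul_zero]
      positivity
  · -- Bernoulli: `(M / b) ^ (k + 1) ≥ 1 + (k + 1) (M / b - 1) = a / b`
    have key := one_add_mul_le_pow (a := M / b - 1) (by linarith [div_nonneg hM0 hb.le]) (k + 1)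
    have hlhs : 1 + ((k + 1 : ℕ) : ℝ) * (M / b - 1) = a / b := by
      rw [hM]; field_simp; push_cast; ring
    rw [add_sub_cancel, hlhs, div_pow, div_le_div_iff₀ hb (by positivity), pow_succ,
      ← mul_assoc] at key
    exact le_of_mul_le_mul_right key hb

section InducedPaths

variable {V : Type*} (G : SimpleGraph V)

theorem pull_tail_eq_pathGraph {k : ℕ} {f : Fin (k + 2) → V}
    (hpath : pull G f = pathGraph (k + 2)) : pull G (Fin.tail f) = pathGraph (k + 1) := by
  ext i j
  change (pull G f).Adj i.succ j.succ ↔ _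
  simp [hpath, pathGraph_adj]

variable [DecidableEq V] [DecidableRel G.Adj]

/-- The next vertex is a neighbour of the current vertex `u` in the candidate set `S`; all later
vertices must avoid `u` and its neighbours, which are therefore removed from `S`. -/
def inducedPathTails : (k : ℕ) → Finset V → V → Finset (Fin k → V)
  | 0, _, _ => {Fin.elim0}
  | k + 1, S, u => {w ∈ S | G.Adj u w}.biUnion fun w =>
      (inducedPathTails k ({v ∈ S | ¬ G.Adj u v}.erase u) w).image (Fin.cons w)

theorem card_inducedPathTails_le (k : ℕ) (S : Finset V) (u : V) :
    (#(inducedPathTails G k S u) : ℝ) ≤ (#S / k : ℝ) ^ k := by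
  induction k generalizing S u with
  | zero => simp [inducedPathTails]
  | succ k ih =>
    set A := {w ∈ S | G.Adj u w}
    set S' := {v ∈ S | ¬ G.Adj u v}.erase u
    have hS' : (#S' : ℝ) ≤ #S - #A := by
      have h1 : #S' ≤ #{v ∈ S | ¬ G.Adj u v} := card_erase_le
      have h2 : #A + #{v ∈ S | ¬ G.Adj u v} = #S := card_filter_add_card_filter_not _
      rw [le_sub_iff_add_le]
      exact_mod_cast (by omega : #S' + #A ≤ #S)
    have hA : (#A : ℝ) ≤ #S := by exact_mod_cast card_filter_le S _
    calc (#(inducedPathTails G (k + 1) S u) : ℝ)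
        ≤ ∑ w ∈ A, (#(inducedPathTails G k S' w) : ℝ) := by
          rw [inducedPathTails]
          exact_mod_cast card_biUnion_le.trans (sum_le_sum fun w _ => card_image_le)
      _ ≤ ∑ _w ∈ A, ((#S - #A) / k : ℝ) ^ k := by
          gcongr with w
          exact (ih S' w).trans (by gcongr)
      _ = #A * ((#S - #A) / k : ℝ) ^ k := by rw [sum_const, nsmul_eq_mul]
      _ ≤ (#S / (k + 1 : ℕ) : ℝ) ^ (k + 1) := by
          rcases k.eq_zero_or_pos with rfl | hk
          · simpa using hA
          · have hsum : (#A : ℝ) + k * ((#S - #A) / k) = #S := by field_simp; ring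
            have := mul_pow_le_mean_pow k (div_nonneg (sub_nonneg.2 hA) k.cast_nonneg)
              (hsum ▸ (#S).cast_nonneg)
            rwa [hsum, ← Nat.cast_succ] at this

theorem tail_mem_inducedPathTails {k : ℕ} {S : Finset V} {f : Fin (k + 1) → V}
    (hf : Function.Injective f) (hpath : pull G f = pathGraph (k + 1))
    (hS : ∀ i ≠ 0, f i ∈ S) : Fin.tail f ∈ inducedPathTails G k S (f 0) := by
  induction k generalizing S with
  | zero => simp [inducedPathTails, eq_iff_true_of_subsingleton]
  | succ k ih =>
    have hadj (i j) : G.Adj (f i) (f j) ↔ (pathGraph (k + 2)).Adj i j := by rw [← hpath]; rfl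
    rw [inducedPathTails, mem_biUnion]
    refine ⟨Fin.tail f 0, mem_filter.2 ⟨hS _ (Fin.succ_ne_zero 0), (hadj _ _).2 ?_⟩,
      mem_image.2 ⟨Fin.tail (Fin.tail f), ih (hf.comp (Fin.succ_injective _))
        (pull_tail_eq_pathGraph G hpath) fun i hi => ?_, Fin.cons_self_tail _⟩⟩
    · simp [pathGraph_adj]
    · refine mem_erase.2 ⟨hf.ne (Fin.succ_ne_zero i),
        mem_filter.2 ⟨hS _ (Fin.succ_ne_zero i), ?_⟩⟩
      change ¬ G.Adj (f 0) (f i.succ)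
      rw [hadj, pathGraph_adj]
      have : (i : ℕ) ≠ 0 := Fin.val_ne_zero_iff.2 hi
      simp only [Fin.val_zero, Fin.val_succ]
      omega

end InducedPaths

section Copies

variable {V : Type*} {t : ℕ} (G : SimpleGraph V) (H : SimpleGraph (Fin t))

abbrev InducedCopy := {s : Finset V // #s = t ∧ Nonempty (G.induce (↑s : Set V) ≃g H)}

abbrev InducedEmbedding := {f : Fin t → V // Function.Injective f ∧ pull G f = H}

variable {G H}

noncomputable def InducedCopy.label (c : InducedCopy G H) (σ : H ≃g H) : InducedEmbedding G H :=
  let e : G.induce (↑c.1 : Set V) ≃g H := c.2.2.some.trans σ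
  ⟨fun i => e.symm i, Subtype.val_injective.comp e.symm.injective,
    by ext; exact e.symm.map_adj_iff⟩

theorem InducedCopy.range_label (c : InducedCopy G H) (σ : H ≃g H) :
    Set.range (c.label σ).1 = ↑c.1 := by
  ext v
  refine ⟨fun ⟨i, hi⟩ => hi ▸ Subtype.mem _,
    fun hv => ⟨c.2.2.some.trans σ ⟨v, hv⟩, ?_⟩⟩
  simp [InducedCopy.label]

theorem InducedCopy.label_injective :
    Function.Injective fun p : InducedCopy G H × (H ≃g H) => p.1.label p.2 := by
  rintro ⟨c, σ⟩ ⟨c', σ'⟩ h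
  obtain rfl : c = c' := Subtype.ext <| Finset.coe_injective <| by
    rw [← c.range_label σ, ← c'.range_label σ']
    exact congrArg (fun f : InducedEmbedding G H => Set.range f.1) h
  have hsymm : σ.symm = σ'.symm := RelIso.ext fun j =>
    c.2.2.some.symm.injective <| Subtype.val_injective <| congrFun (congrArg Subtype.val h) j
  simpa using congrArg RelIso.symm hsymm

theorem two_mul_card_inducedCopy_le [Finite V] (σ : H ≃g H) (hσ : σ ≠ 1) :
    2 * Nat.card (InducedCopy G H) ≤ Nat.card (InducedEmbedding G H) := by
  have hpair : Function.Injective fun b : Bool => bif b then σ else 1 := by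
    intro b b' h
    cases b <;> cases b' <;> simp_all [eq_comm]
  have := Nat.card_le_card_of_injective (β := InducedEmbedding G H) _
    (InducedCopy.label_injective.comp (Function.injective_id.prodMap hpair))
  rwa [Nat.card_prod, Nat.card_eq_fintype_card (α := Bool), Fintype.card_bool, mul_comm] at this

end Copies

def pathGraphReverse (n : ℕ) : pathGraph n ≃g pathGraph n where
  toEquiv := Fin.revPerm
  map_rel_iff' := by
    intro i j
    simp only [Fin.revPerm_apply, pathGraph_adj, Fin.val_rev]
    omega

theorem pathGraphReverse_ne_one {n : ℕ} (hn : 2 ≤ n) : pathGraphReverse n ≠ 1 := by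
  intro h
  have := congrArg (fun σ : pathGraph n ≃g pathGraph n => (σ ⟨0, by omega⟩ : ℕ)) h
  simp [pathGraphReverse] at this
  omega

section PathCount

variable {V : Type*} [Fintype V] (G : SimpleGraph V)

theorem card_inducedEmbedding_pathGraph_le (k : ℕ) :
    (Nat.card (InducedEmbedding G (pathGraph (k + 1))) : ℝ) ≤
      Fintype.card V * (Fintype.card V / k : ℝ) ^ k := by
  classical
  let T : Finset (Fin (k + 1) → V) :=
    univ.biUnion fun u => (inducedPathTails G k univ u).image (Fin.cons u)
  have hcard : Nat.card (InducedEmbedding G (pathGraph (k + 1))) ≤ #T := by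
    rw [Nat.card_eq_fintype_card, Fintype.card_subtype]
    refine card_le_card fun f hf => ?_
    obtain ⟨hinj, hpath⟩ := (mem_filter.1 hf).2
    exact mem_biUnion.2 ⟨f 0, mem_univ _, mem_image.2 ⟨Fin.tail f,
      tail_mem_inducedPathTails G hinj hpath fun _ _ => mem_univ _, Fin.cons_self_tail f⟩⟩
  calc (Nat.card (InducedEmbedding G (pathGraph (k + 1))) : ℝ)
      ≤ ∑ u : V, (#(inducedPathTails G k univ u) : ℝ) := by
        exact_mod_cast hcard.trans (card_biUnion_le.trans (sum_le_sum fun u _ => card_image_le))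
    _ ≤ ∑ _u : V, (Fintype.card V / k : ℝ) ^ k := by
        gcongr with u
        simpa using card_inducedPathTails_le G k univ u
    _ = Fintype.card V * (Fintype.card V / k : ℝ) ^ k := by
        rw [sum_const, nsmul_eq_mul, card_univ]

theorem subsetDensity_pathGraph_le {k : ℕ} (hk : k ≠ 0) :
    subsetDensity (pathGraph (k + 1)) G ≤
      Fintype.card V * (Fintype.card V / k : ℝ) ^ k / 2 / (Fintype.card V).choose (k + 1) := by
  unfold subsetDensity
  gcongr
  have hcopies : 2 * (Nat.card (InducedCopy G (pathGraph (k + 1))) : ℝ) ≤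
      Nat.card (InducedEmbedding G (pathGraph (k + 1))) := by
    exact_mod_cast two_mul_card_inducedCopy_le (G := G) _
      (pathGraphReverse_ne_one (n := k + 1) (by omega))
  have hemb := card_inducedEmbedding_pathGraph_le G k
  change (Nat.card (InducedCopy G (pathGraph (k + 1))) : ℝ) ≤ _
  rw [le_div_iff₀ two_pos]
  linarith

end PathCount

section Inducibility

variable {t : ℕ} {H : SimpleGraph (Fin t)} {n : ℕ}

theorem subsetDensity_le_maxDensity (G : SimpleGraph (Fin n)) :
    subsetDensity H G ≤ maxDensity H n := by
  refine le_csSup ((Set.finite_range fun G : SimpleGraph (Fin n) => subsetDensity H G).subset ?_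
    |>.bddAbove) ⟨G, rfl⟩
  rintro _ ⟨G, rfl⟩
  exact ⟨G, rfl⟩

theorem maxDensity_nonneg : 0 ≤ maxDensity H n :=
  (by unfold subsetDensity; positivity : 0 ≤ subsetDensity H ⊥).trans
    (subsetDensity_le_maxDensity ⊥)

theorem maxDensity_le {c : ℝ} (h : ∀ G : SimpleGraph (Fin n), subsetDensity H G ≤ c) :
    maxDensity H n ≤ c :=
  csSup_le ⟨_, ⊥, rfl⟩ fun _ ⟨G, hG⟩ => hG ▸ h G

theorem inducibility_le_of_tendsto {b : ℕ → ℝ} {L : ℝ} (hb : ∀ n, maxDensity H n ≤ b n)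
    (hL : Tendsto b atTop (𝓝 L)) : inducibility H ≤ L := by
  rw [← hL.limsup_eq]
  exact limsup_le_limsup (.of_forall hb)
    (isCoboundedUnder_le_of_le _ fun _ => maxDensity_nonneg) hL.isBoundedUnder_le

end Inducibility

theorem tendsto_pathGraph_bound {k : ℕ} (hk : k ≠ 0) :
    Tendsto (fun n : ℕ => (n * (n / k) ^ k / 2 / n.choose (k + 1) : ℝ)) atTop
      (𝓝 ((k + 1).factorial / (2 * k ^ k))) := by
  have h := (Asymptotics.IsEquivalent.refl (u := fun n : ℕ => (n * (n / k) ^ k / 2 : ℝ))).div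
    (isEquivalent_choose (k + 1))
  refine (h.congr_right ?_).tendsto_const
  filter_upwards [eventually_ne_atTop 0] with n hn
  have hk' : (k : ℝ) ≠ 0 := by exact_mod_cast hk
  simp only [Pi.div_apply, Function.const_apply, div_pow]
  field_simp
  ring

end IndPaper

open IndPaper in
/-- For `t ≥ 5`, the inducibility of the `t`-vertex path satisfies
`I(P_t) ≤ t!/(2(t−1)^{t−1})`. -/
theorem inducibility_path_upper {t : ℕ} (ht : 5 ≤ t) :
    inducibility (SimpleGraph.pathGraph t) ≤
      (Nat.factorial t : ℝ) / (2 * ((t : ℝ) - 1) ^ (t - 1)) := by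
  obtain ⟨k, rfl⟩ : ∃ k, t = k + 1 := ⟨t - 1, by omega⟩
  have hk : k ≠ 0 := by omega
  rw [Nat.add_sub_cancel, Nat.cast_succ, add_sub_cancel_right]
  exact inducibility_le_of_tendsto
    (fun n => maxDensity_le fun G => by simpa using subsetDensity_pathGraph_le G hk)
    (tendsto_pathGraph_bound hk)
end
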